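/- arXiv:1708.03036 — 4 statements merged into one kernel-verified Lean document; each statement's English description precedes it below -/
import Mathlib

section
/- Let k be an algebraically closed field of characteristic 2, K a function field of one variable over k, f ∈ H, and v a place of K. Then f is pseudo-tame at v if and only if there exist a, b, c, d ∈ K with a·d ≠ b·c such that v((a⁴·f + b⁴)/(c⁴·f + d⁴)) = 1. -/
/-- A place of a function field `K` over `k`. -/
structure Place (k K : Type*) [Field k] [Field K] [Algebra k K] where
  v : K → ℤ
  v_mul : ∀ x y : K, x ≠ 0 → y ≠ 0 → v (x * y) = v x + v y
  v_add : ∀ x y : K, x ≠ 0 → y ≠ 0 → x + y ≠ 0 → min (v x) (v y) ≤ v (x + y)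
  v_surj : ∀ n : ℤ, ∃ x : K, x ≠ 0 ∧ v x = n
  v_const : ∀ c : k, c ≠ 0 → v (algebraMap k K c) = 0

/-- `K` is a function field of one variable over `k`. -/
def IsFunctionFieldOneVar (k K : Type*) [Field k] [Field K] [Algebra k K] : Prop :=
  ∃ x : K, Transcendental k x ∧
    FiniteDimensional (IntermediateField.adjoin k ({x} : Set K)) K

/-- `f ∈ H = K \ K²` is pseudo-tame at a place `v`: setting `t := f - c` (`c` the
residue of `f` at `v`) if `v f ≥ 0`, and `t := 1/f` if `v f < 0`, there is `h` in
the valuation ring `O_v` such that `v (t + h⁴)` is odd. -/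
def PseudoTameAt {k K : Type*} [Field k] [Field K] [Algebra k K]
    (P : Place k K) (f : K) : Prop :=
  ∃ t : K,
    ((0 ≤ P.v f ∧ ∃ c : k, t = f - algebraMap k K c ∧ t ≠ 0 ∧ 0 < P.v t) ∨
      (P.v f < 0 ∧ t = f⁻¹)) ∧
    ∃ h : K, (h = 0 ∨ 0 ≤ P.v h) ∧ t + h ^ 4 ≠ 0 ∧ Odd (P.v (t + h ^ 4))

namespace PTaux

open Polynomial IntermediateField

variable {k K : Type*} [Field k] [Field K] [Algebra k K]

lemma v_one (P : Place k K) : P.v 1 = 0 := by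
  have := P.v_const 1 one_ne_zero
  simpa using this

lemma v_inv (P : Place k K) {x : K} (hx : x ≠ 0) : P.v x⁻¹ = -P.v x := by
  have h := P.v_mul x x⁻¹ hx (inv_ne_zero hx)
  rw [mul_inv_cancel₀ hx, v_one] at h
  omega

lemma v_div (P : Place k K) {x y : K} (hx : x ≠ 0) (hy : y ≠ 0) :
    P.v (x / y) = P.v x - P.v y := by
  rw [div_eq_mul_inv, P.v_mul _ _ hx (inv_ne_zero hy), v_inv P hy]
  ring

lemma v_pow (P : Place k K) {x : K} (hx : x ≠ 0) (n : ℕ) : P.v (x ^ n) = n * P.v x := by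
  induction n with
  | zero => simpa using v_one P
  | succ n ih =>
      rw [pow_succ, P.v_mul _ _ (pow_ne_zero _ hx) hx, ih]
      push_cast
      ring

lemma sub_eq_add' [CharP K 2] (x y : K) : x - y = x + y := by
  rw [sub_eq_add_neg, CharTwo.neg_eq]

lemma pow4_add [CharP K 2] (x y : K) : (x + y) ^ 4 = x ^ 4 + y ^ 4 := by
  have h2 : ∀ a b : K, (a + b) ^ 2 = a ^ 2 + b ^ 2 := fun a b => CharTwo.add_sq a b
  calc (x + y) ^ 4 = ((x + y) ^ 2) ^ 2 := by ring
    _ = (x ^ 2 + y ^ 2) ^ 2 := by rw [h2]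
    _ = (x ^ 2) ^ 2 + (y ^ 2) ^ 2 := h2 _ _
    _ = x ^ 4 + y ^ 4 := by ring

lemma v_add_eq [CharP K 2] (P : Place k K) {x y : K} (hx : x ≠ 0) (hy : y ≠ 0)
    (hlt : P.v x < P.v y) : P.v (x + y) = P.v x := by
  have hne : x + y ≠ 0 := by
    intro h
    have hxy : x = y := by
      rw [← CharTwo.neg_eq (R := K) y]
      exact eq_neg_of_add_eq_zero_left h
    rw [hxy] at hlt
    omega
  have h1 := P.v_add x y hx hy hne
  have h2 := P.v_add (x + y) y hne hy (by
    have : x + y + y = x := by rw [add_assoc, CharTwo.add_self_eq_zero, add_zero]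
    rw [this]; exact hx)
  have h3 : x + y + y = x := by rw [add_assoc, CharTwo.add_self_eq_zero, add_zero]
  rw [h3] at h2
  omega

lemma v_sum_ge (P : Place k K) {ι : Type*} {s : Finset ι} {g : ι → K} {m : ℤ}
    (h : ∀ i ∈ s, g i ≠ 0 → m ≤ P.v (g i)) (hs : (∑ x ∈ s, g x) ≠ 0) : m ≤ P.v (∑ x ∈ s, g x) := by
  classical
  induction s using Finset.induction_on with
  | empty => simp at hs
  | @insert a s ha ih =>
      rw [Finset.sum_insert ha] at hs ⊢
      by_cases h1 : g a = 0
      · rw [h1, zero_add] at hs ⊢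
        exact ih (fun i hi => h i (Finset.mem_insert_of_mem hi)) hs
      · by_cases h2 : (∑ x ∈ s, g x) = 0
        · rw [h2, add_zero]
          exact h a (Finset.mem_insert_self a s) h1
        · have h3 := P.v_add (g a) (∑ x ∈ s, g x) h1 h2 hs
          have h4 := h a (Finset.mem_insert_self a s) h1
          have h5 := ih (fun i hi => h i (Finset.mem_insert_of_mem hi)) h2
          omega









lemma eval_contradiction [CharP K 2] (P : Place k K) {x₁ : K} (hx₁0 : x₁ ≠ 0)
    (hx₁ : P.v x₁ = -1) {p : Polynomial K} (hp0 : p ≠ 0)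
    (hc : ∀ j, p.coeff j ≠ 0 → P.v (p.coeff j) = 0) (he : p.eval x₁ = 0) : False := by
  set n := p.natDegree with hn
  have hn0 : n ≠ 0 := by
    intro h
    obtain ⟨c, rfl⟩ := Polynomial.natDegree_eq_zero.mp h
    simp only [Polynomial.eval_C] at he
    exact hp0 (by rw [he, map_zero])
  have hsum : (∑ i ∈ Finset.range n, p.coeff i * x₁ ^ i) + p.coeff n * x₁ ^ n = 0 := by
    rw [← Finset.sum_range_succ]
    rw [← Polynomial.eval_eq_sum_range]
    exact he
  have hlead : p.coeff n ≠ 0 := by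
    rw [hn]
    exact Polynomial.leadingCoeff_ne_zero.mpr hp0
  have htop : p.coeff n * x₁ ^ n ≠ 0 := mul_ne_zero hlead (pow_ne_zero _ hx₁0)
  have hEq : p.coeff n * x₁ ^ n = ∑ i ∈ Finset.range n, p.coeff i * x₁ ^ i := by
    have h1 : p.coeff n * x₁ ^ n = -(∑ i ∈ Finset.range n, p.coeff i * x₁ ^ i) :=
      eq_neg_of_add_eq_zero_right hsum
    rw [h1, CharTwo.neg_eq]
  have hub : P.v (p.coeff n * x₁ ^ n) = -(n : ℤ) := by
    rw [P.v_mul _ _ hlead (pow_ne_zero _ hx₁0), hc n hlead, v_pow P hx₁0, hx₁]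
    ring
  have hlb : -(n : ℤ) + 1 ≤ P.v (∑ i ∈ Finset.range n, p.coeff i * x₁ ^ i) := by
    apply v_sum_ge
    · intro i hi hgne
      have hci : p.coeff i ≠ 0 := fun h => hgne (by rw [h, zero_mul])
      rw [P.v_mul _ _ hci (pow_ne_zero _ hx₁0), hc i hci, v_pow P hx₁0, hx₁]
      have : i < n := Finset.mem_range.mp hi
      omega
    · rw [← hEq]; exact htop
  rw [hEq] at hub
  omega

lemma exchange {x w : K} (hx : Transcendental k x) (hw : Transcendental k w)
    (halg : IsAlgebraic (IntermediateField.adjoin k ({x} : Set K)) w) :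
    IsAlgebraic (IntermediateField.adjoin k ({w} : Set K)) x := by
  classical
  obtain ⟨q, hq0, hq⟩ := halg
  set n := q.natDegree with hn
  have hmem : ∀ i : ℕ, ∃ r s : Polynomial k, Polynomial.aeval x s ≠ 0 ∧
      ((q.coeff i : K)) * Polynomial.aeval x s = Polynomial.aeval x r := by
    intro i
    obtain ⟨r, s, hrs⟩ :=
      (IntermediateField.mem_adjoin_simple_iff k ((q.coeff i : K))).mp (SetLike.coe_mem _)
    by_cases hs : Polynomial.aeval x s = 0
    · refine ⟨0, 1, by simp, ?_⟩
      rw [hrs, hs, div_zero]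
      simp
    · exact ⟨r, s, hs, by rw [hrs, div_mul_cancel₀ _ hs]⟩
  choose r s hs hrs using hmem
  set g : ℕ → Polynomial k := fun i => r i * ∏ j ∈ (Finset.range (n + 1)).erase i, s j with hg
  have key : ∑ i ∈ Finset.range (n + 1), (Polynomial.aeval x (g i)) * w ^ i = 0 := by
    have h1 : ∀ i ∈ Finset.range (n + 1), Polynomial.aeval x (g i) * w ^ i
        = (∏ j ∈ Finset.range (n + 1), Polynomial.aeval x (s j)) * (((q.coeff i : K)) * w ^ i) := by
      intro i hi
      have h2 : Polynomial.aeval x (g i) = Polynomial.aeval x (r i) *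
          ∏ j ∈ (Finset.range (n + 1)).erase i, Polynomial.aeval x (s j) := by
        rw [hg]
        simp [map_prod]
      rw [h2, ← hrs i, ← Finset.mul_prod_erase _ (fun j => Polynomial.aeval x (s j)) hi]
      ring
    rw [Finset.sum_congr rfl h1, ← Finset.mul_sum]
    have h3 : ∑ i ∈ Finset.range (n + 1), ((q.coeff i : K)) * w ^ i = 0 := by
      have h4 := Polynomial.aeval_eq_sum_range (p := q) w
      rw [hq] at h4
      have h5 : ∀ i ∈ Finset.range (n + 1), q.coeff i • w ^ i = ((q.coeff i : K)) * w ^ i := by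
        intro i _
        rw [Algebra.smul_def]
        rfl
      rw [← Finset.sum_congr rfl h5, ← h4]
    rw [h3, mul_zero]
  have hsne : ∀ j, s j ≠ 0 := by
    intro j h
    exact hs j (by rw [h, map_zero])
  have hcoeffn : ((q.coeff n : K)) ≠ 0 := by
    have := Polynomial.leadingCoeff_ne_zero.mpr hq0
    rw [Polynomial.leadingCoeff, ← hn] at this
    simpa using this
  have hgn : g n ≠ 0 := by
    have hrn : r n ≠ 0 := by
      intro h
      apply hcoeffn
      have h6 := hrs n
      rw [h, map_zero] at h6
      exact (mul_eq_zero.mp h6).resolve_right (hs n)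
    exact mul_ne_zero hrn (Finset.prod_ne_zero_iff.mpr fun j _ => hsne j)
  -- build polynomial over F := k⟮w⟯
  set F := IntermediateField.adjoin k ({w} : Set K) with hF
  set w' : F := IntermediateField.AdjoinSimple.gen k w with hw'
  have hw'K : (algebraMap F K) w' = w := IntermediateField.AdjoinSimple.algebraMap_gen k w
  set G : Polynomial F := ∑ i ∈ Finset.range (n + 1),
      Polynomial.C (w' ^ i) * (g i).map (algebraMap k F) with hG
  set d := (g n).natDegree with hd
  set D : Polynomial k := ∑ i ∈ Finset.range (n + 1),
      Polynomial.C ((g i).coeff d) * Polynomial.X ^ i with hD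
  have hGc : G.coeff d = Polynomial.aeval w' D := by
    rw [hG, hD, Polynomial.finset_sum_coeff, map_sum]
    apply Finset.sum_congr rfl
    intro i _
    rw [Polynomial.coeff_C_mul, Polynomial.coeff_map, map_mul, Polynomial.aeval_C, map_pow,
      Polynomial.aeval_X]
    ring
  have hDne : D ≠ 0 := by
    intro h
    have h7 : D.coeff n = (g n).coeff d := by
      rw [hD, Polynomial.finset_sum_coeff]
      rw [Finset.sum_eq_single n]
      · rw [Polynomial.coeff_C_mul, Polynomial.coeff_X_pow, if_pos rfl, mul_one]
      · intro b _ hb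
        rw [Polynomial.coeff_C_mul, Polynomial.coeff_X_pow, if_neg (fun hh => hb hh.symm), mul_zero]
      · intro hnn
        exact absurd (Finset.self_mem_range_succ n) hnn
    rw [h] at h7
    simp only [Polynomial.coeff_zero] at h7
    rw [hd] at h7
    exact (Polynomial.leadingCoeff_ne_zero.mpr hgn) h7.symm
  have hw'tr : ∀ p : Polynomial k, Polynomial.aeval w' p = 0 → p = 0 := by
    intro p hp
    apply transcendental_iff.mp hw
    have := congrArg (algebraMap F K) hp
    rw [map_zero] at this
    rw [← this, ← Polynomial.aeval_algebraMap_apply, hw'K]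
  refine ⟨G, ?_, ?_⟩
  · intro h
    rw [h] at hGc
    simp only [Polynomial.coeff_zero] at hGc
    exact hDne (hw'tr D hGc.symm)
  · rw [hG, map_sum]
    have h8 : ∀ i ∈ Finset.range (n + 1),
        Polynomial.aeval x (Polynomial.C (w' ^ i) * (g i).map (algebraMap k F))
          = Polynomial.aeval x (g i) * w ^ i := by
      intro i _
      rw [map_mul, Polynomial.aeval_C, Polynomial.aeval_map_algebraMap, map_pow, hw'K]
      ring
    rw [Finset.sum_congr rfl h8, key]










set_option maxHeartbeats 1000000 in
set_option synthInstance.maxHeartbeats 400000 in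
lemma residue [IsAlgClosed k] [CharP K 2] (hK : IsFunctionFieldOneVar k K) (P : Place k K)
    {w : K} (hvw : P.v w = 0) :
    ∃ α : k, w - algebraMap k K α = 0 ∨
      (w - algebraMap k K α ≠ 0 ∧ 0 < P.v (w - algebraMap k K α)) := by
  classical
  by_contra hcon
  push_neg at hcon
  have hcon' : ∀ α : k, w - algebraMap k K α ≠ 0 ∧ ¬(0 < P.v (w - algebraMap k K α)) := by
    intro α
    obtain ⟨h1, h2⟩ := hcon α
    exact ⟨h1, not_lt.2 (h2 h1)⟩
  have hw0 : w ≠ 0 := by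
    have := (hcon' 0).1
    simpa using this
  have hzero : ∀ α : k, w - algebraMap k K α ≠ 0 ∧ P.v (w - algebraMap k K α) = 0 := by
    intro α
    refine ⟨(hcon' α).1, le_antisymm (not_lt.1 (hcon' α).2) ?_⟩
    by_cases hα : α = 0
    · subst hα
      simp [hvw]
    · have h1 : w - algebraMap k K α = w + algebraMap k K α := sub_eq_add' _ _
      have h2 := P.v_add w (algebraMap k K α) hw0
        ((map_ne_zero (algebraMap k K)).mpr hα) (h1 ▸ (hcon' α).1)
      rw [hvw, P.v_const α hα] at h2
      rw [h1]
      simpa using h2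
  -- every nonzero polynomial in w has valuation 0
  have hpoly : ∀ N : ℕ, ∀ p : Polynomial k, p.natDegree ≤ N → p ≠ 0 →
      Polynomial.aeval w p ≠ 0 ∧ P.v (Polynomial.aeval w p) = 0 := by
    intro N
    induction N with
    | zero =>
        intro p hd h0
        obtain ⟨c, rfl⟩ := Polynomial.natDegree_eq_zero.mp (Nat.le_zero.mp hd)
        have hc : c ≠ 0 := fun h => h0 (by rw [h, map_zero])
        rw [Polynomial.aeval_C]
        exact ⟨(map_ne_zero (algebraMap k K)).mpr hc, P.v_const c hc⟩
    | succ N ih =>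
        intro p hd h0
        by_cases h1 : p.natDegree = 0
        · obtain ⟨c, rfl⟩ := Polynomial.natDegree_eq_zero.mp h1
          have hc : c ≠ 0 := fun h => h0 (by rw [h, map_zero])
          rw [Polynomial.aeval_C]
          exact ⟨(map_ne_zero (algebraMap k K)).mpr hc, P.v_const c hc⟩
        · have hdeg : p.degree ≠ 0 := by
            intro h
            exact h1 (Polynomial.natDegree_eq_zero_iff_degree_le_zero.mpr (le_of_eq h))
          obtain ⟨α, hα⟩ := IsAlgClosed.exists_root p hdeg
          obtain ⟨q, rfl⟩ := Polynomial.dvd_iff_isRoot.mpr hα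
          have hq0 : q ≠ 0 := by
            intro h
            rw [h, mul_zero] at h0
            exact h0 rfl
          have hXC : (Polynomial.X - Polynomial.C α : Polynomial k) ≠ 0 :=
            Polynomial.X_sub_C_ne_zero α
          have hdq : q.natDegree ≤ N := by
            have h2 := Polynomial.natDegree_mul hXC hq0
            rw [Polynomial.natDegree_X_sub_C] at h2
            omega
          obtain ⟨hq1, hq2⟩ := ih q hdq hq0
          have heval : Polynomial.aeval w ((Polynomial.X - Polynomial.C α) * q)
              = (w - algebraMap k K α) * Polynomial.aeval w q := by
            rw [map_mul, map_sub, Polynomial.aeval_X, Polynomial.aeval_C]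
          rw [heval]
          refine ⟨mul_ne_zero (hzero α).1 hq1, ?_⟩
          rw [P.v_mul _ _ (hzero α).1 hq1, (hzero α).2, hq2]
          norm_num
  have hwtr : Transcendental k w := by
    rw [transcendental_iff]
    intro p hp
    by_contra h0
    exact (hpoly p.natDegree p le_rfl h0).1 hp
  -- triviality of v on k⟮w⟯
  set F := IntermediateField.adjoin k ({w} : Set K) with hFdef
  have hF : ∀ z : K, z ∈ F → z ≠ 0 → P.v z = 0 := by
    intro z hz hz0
    obtain ⟨r, s, hrs⟩ := (IntermediateField.mem_adjoin_simple_iff k z).mp hz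
    have hs0 : s ≠ 0 := by
      intro h
      rw [h, map_zero, div_zero] at hrs
      exact hz0 hrs
    have hr0 : r ≠ 0 := by
      intro h
      rw [h, map_zero, zero_div] at hrs
      exact hz0 hrs
    obtain ⟨hr1, hr2⟩ := hpoly r.natDegree r le_rfl hr0
    obtain ⟨hs1, hs2⟩ := hpoly s.natDegree s le_rfl hs0
    rw [hrs, v_div P hr1 hs1, hr2, hs2]
    norm_num
  -- K is finite over F
  obtain ⟨x₀, hx₀tr, hfd⟩ := hK
  set E := IntermediateField.adjoin k ({x₀} : Set K) with hEdef
  haveI : FiniteDimensional E K := hfd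
  have halgw : IsAlgebraic E w := IsAlgebraic.of_finite E w
  have hxalg : IsAlgebraic F x₀ := exchange hx₀tr hwtr halgw
  set N := IntermediateField.adjoin F ({x₀} : Set K) with hNdef
  haveI hFN : FiniteDimensional F N := IntermediateField.adjoin.finiteDimensional hxalg.isIntegral
  have hEN : E ≤ N.restrictScalars k := by
    rw [hEdef]
    apply IntermediateField.adjoin_le_iff.mpr
    intro z hz
    rw [Set.mem_singleton_iff] at hz
    rw [hz]
    have hmem : x₀ ∈ N := IntermediateField.subset_adjoin F _ (Set.mem_singleton x₀)
    exact hmem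
  haveI hNK : FiniteDimensional (N.restrictScalars k) K := by
    letI : Algebra E (N.restrictScalars k) := (IntermediateField.inclusion hEN).toAlgebra
    haveI : IsScalarTower E (N.restrictScalars k) K :=
      IsScalarTower.of_algebraMap_eq (fun x => rfl)
    exact Module.Finite.right E (N.restrictScalars k) K
  haveI hNK' : FiniteDimensional N K := hNK
  haveI hFK : FiniteDimensional F K := Module.Finite.trans N K
  haveI : Algebra.IsAlgebraic F K := Algebra.IsAlgebraic.of_finite F K
  -- contradiction
  obtain ⟨x₁, hx₁0, hx₁⟩ := P.v_surj (-1)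
  obtain ⟨q, hq0, hq⟩ := (Algebra.IsAlgebraic.isAlgebraic (R := F) x₁)
  refine eval_contradiction P hx₁0 hx₁
    (p := q.map (algebraMap F K)) ?_ ?_ ?_
  · exact (Polynomial.map_ne_zero_iff (algebraMap F K).injective).mpr hq0
  · intro j hj
    rw [Polynomial.coeff_map] at hj ⊢
    exact hF _ (SetLike.coe_mem _) hj
  · rw [Polynomial.eval_map, ← Polynomial.aeval_def, hq]










lemma odd_mod4 {n : ℤ} (h : Odd n) : n % 4 = 1 ∨ n % 4 = 3 := by
  obtain ⟨m, hm⟩ := h; omega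

lemma scale [CharP K 2] (P : Place k K) (f : K) {a0 b0 c0 d0 : K} (hdet : a0 * d0 ≠ b0 * c0)
    (hN : a0 ^ 4 * f + b0 ^ 4 ≠ 0) (hD : c0 ^ 4 * f + d0 ^ 4 ≠ 0)
    (hodd : Odd (P.v ((a0 ^ 4 * f + b0 ^ 4) / (c0 ^ 4 * f + d0 ^ 4)))) :
    ∃ a b c d : K, a * d ≠ b * c ∧ P.v ((a ^ 4 * f + b ^ 4) / (c ^ 4 * f + d ^ 4)) = 1 := by
  have hvq : P.v ((a0 ^ 4 * f + b0 ^ 4) / (c0 ^ 4 * f + d0 ^ 4))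
      = P.v (a0 ^ 4 * f + b0 ^ 4) - P.v (c0 ^ 4 * f + d0 ^ 4) := v_div P hN hD
  set nv := P.v ((a0 ^ 4 * f + b0 ^ 4) / (c0 ^ 4 * f + d0 ^ 4)) with hnv
  rcases odd_mod4 hodd with h4 | h4
  · obtain ⟨u, hu0, huv⟩ := P.v_surj (-(nv / 4))
    refine ⟨u * a0, u * b0, c0, d0, ?_, ?_⟩
    · intro h
      apply hdet
      have h2 : u * (a0 * d0) = u * (b0 * c0) := by linear_combination h
      exact mul_left_cancel₀ hu0 h2
    · have he : (u * a0) ^ 4 * f + (u * b0) ^ 4 = u ^ 4 * (a0 ^ 4 * f + b0 ^ 4) := by ring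
      rw [he]
      have hu4 : u ^ 4 * (a0 ^ 4 * f + b0 ^ 4) ≠ 0 := mul_ne_zero (pow_ne_zero _ hu0) hN
      rw [v_div P hu4 hD, P.v_mul _ _ (pow_ne_zero _ hu0) hN, v_pow P hu0, huv]
      push_cast
      omega
  · obtain ⟨u, hu0, huv⟩ := P.v_surj (-(nv / 4) - 1)
    refine ⟨c0, d0, u * a0, u * b0, ?_, ?_⟩
    · intro h
      apply hdet
      have h2 : u * (a0 * d0) = u * (b0 * c0) := by linear_combination -h
      exact mul_left_cancel₀ hu0 h2
    · have he : (u * a0) ^ 4 * f + (u * b0) ^ 4 = u ^ 4 * (a0 ^ 4 * f + b0 ^ 4) := by ring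
      rw [he]
      have hu4 : u ^ 4 * (a0 ^ 4 * f + b0 ^ 4) ≠ 0 := mul_ne_zero (pow_ne_zero _ hu0) hN
      rw [v_div P hD hu4, P.v_mul _ _ (pow_ne_zero _ hu0) hN, v_pow P hu0, huv]
      push_cast
      omega

lemma extract (P : Place k K) {f a b : K} (hN : a ^ 4 * f + b ^ 4 ≠ 0)
    (hodd : Odd (P.v (a ^ 4 * f + b ^ 4))) :
    ∃ w : K, f + w ^ 4 ≠ 0 ∧ Odd (P.v (f + w ^ 4)) := by
  have ha : a ≠ 0 := by
    rintro rfl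
    have hb : b ≠ 0 := by
      intro hb
      rw [hb] at hN
      norm_num at hN
    rw [show (0:K) ^ 4 * f + b ^ 4 = b ^ 4 by ring, v_pow P hb] at hodd
    obtain ⟨m, hm⟩ := hodd
    push_cast at hm
    omega
  have heq : f + (b / a) ^ 4 = (a ^ 4 * f + b ^ 4) / a ^ 4 := by
    field_simp
  refine ⟨b / a, ?_, ?_⟩
  · rw [heq]
    exact div_ne_zero hN (pow_ne_zero _ ha)
  · rw [heq, v_div P hN (pow_ne_zero _ ha), v_pow P ha]
    obtain ⟨m, hm⟩ := hodd
    refine ⟨m - 2 * P.v a, by push_cast; omega⟩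

lemma forced_eq [CharP K 2] (P : Place k K) {f w : K} (hf0 : f ≠ 0) (hw0 : w ≠ 0)
    (hne : f + w ^ 4 ≠ 0) (hodd : Odd (P.v (f + w ^ 4))) (he : Even (P.v f)) :
    P.v (w ^ 4) = P.v f := by
  by_contra hne4
  rcases lt_or_gt_of_ne hne4 with hlt | hgt
  · rw [add_comm] at hodd hne
    rw [v_add_eq P (pow_ne_zero _ hw0) hf0 hlt, v_pow P hw0] at hodd
    obtain ⟨m, hm⟩ := hodd
    push_cast at hm
    omega
  · rw [v_add_eq P hf0 (pow_ne_zero _ hw0) hgt] at hodd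
    exact (Int.not_odd_iff_even.mpr he) hodd









lemma key [IsAlgClosed k] [CharP K 2] (hK : IsFunctionFieldOneVar k K) (P : Place k K)
    {f : K} (hf : ∀ y : K, y ^ 2 ≠ f) {w : K} (hne : f + w ^ 4 ≠ 0)
    (hodd : Odd (P.v (f + w ^ 4))) : PseudoTameAt P f := by
  have hf0 : f ≠ 0 := fun h => hf 0 (by rw [h]; ring)
  rcases lt_or_ge (P.v f) 0 with hvf | hvf
  · rcases Int.even_or_odd (P.v f) with he | ho
    · -- v f < 0, even
      have hw0 : w ≠ 0 := by
        rintro rfl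
        rw [show f + (0:K) ^ 4 = f by ring] at hodd
        exact (Int.not_odd_iff_even.mpr he) hodd
      have hw4 : w ^ 4 ≠ 0 := pow_ne_zero _ hw0
      have h4w : P.v (w ^ 4) = P.v f := forced_eq P hf0 hw0 hne hodd he
      have hvp := v_pow P hw0 4
      have hvw : P.v w < 0 := by push_cast at hvp; omega
      have hcalc : f⁻¹ + (w⁻¹) ^ 4 = (f + w ^ 4) / (f * w ^ 4) := by
        field_simp
        ring
      refine ⟨f⁻¹, Or.inr ⟨hvf, rfl⟩, w⁻¹, Or.inr ?_, ?_, ?_⟩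
      · rw [v_inv P hw0]; omega
      · rw [hcalc]
        exact div_ne_zero hne (mul_ne_zero hf0 hw4)
      · rw [hcalc, v_div P hne (mul_ne_zero hf0 hw4), P.v_mul _ _ hf0 hw4]
        obtain ⟨m, hm⟩ := hodd
        exact ⟨m - P.v f, by omega⟩
    · -- v f < 0, odd
      refine ⟨f⁻¹, Or.inr ⟨hvf, rfl⟩, 0, Or.inl rfl, ?_, ?_⟩
      · rw [show f⁻¹ + (0:K) ^ 4 = f⁻¹ by ring]
        exact inv_ne_zero hf0
      · rw [show f⁻¹ + (0:K) ^ 4 = f⁻¹ by ring, v_inv P hf0]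
        obtain ⟨m, hm⟩ := ho
        exact ⟨-m - 1, by omega⟩
  · rcases Int.even_or_odd (P.v f) with he | ho
    · -- v f ≥ 0, even
      have hw0 : w ≠ 0 := by
        rintro rfl
        rw [show f + (0:K) ^ 4 = f by ring] at hodd
        exact (Int.not_odd_iff_even.mpr he) hodd
      have hw4 : w ^ 4 ≠ 0 := pow_ne_zero _ hw0
      have h4w : P.v (w ^ 4) = P.v f := forced_eq P hf0 hw0 hne hodd he
      have hvp := v_pow P hw0 4
      rcases eq_or_lt_of_le hvf with hvf0 | hvfpos
      · -- v f = 0 : residue case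
        have hvw0 : P.v w = 0 := by push_cast at hvp; omega
        obtain ⟨α, hα⟩ := residue hK P hvw0
        have htne : f - algebraMap k K (α ^ 4) ≠ 0 := by
          intro h
          apply hf (algebraMap k K (α ^ 2))
          rw [sub_eq_zero] at h
          rw [← map_pow, show (α ^ 2) ^ 2 = α ^ 4 by ring]
          exact h.symm
        have hfw : f - algebraMap k K (α ^ 4) + (w - algebraMap k K α) ^ 4 = f + w ^ 4 := by
          rw [map_pow, sub_eq_add', sub_eq_add', pow4_add]
          have hring : ∀ x y z : K, x + z ^ 4 + (y ^ 4 + z ^ 4) = x + y ^ 4 + (z ^ 4 + z ^ 4) :=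
            fun x y z => by ring
          rw [hring, CharTwo.add_self_eq_zero, add_zero]
        have hposodd : 1 ≤ P.v (f + w ^ 4) := by
          have h1 := P.v_add f (w ^ 4) hf0 hw4 hne
          obtain ⟨m, hm⟩ := hodd
          omega
        rcases hα with hα0 | ⟨hαne, hαpos⟩
        · have hw4α : (w - algebraMap k K α) ^ 4 = 0 := by
            rw [hα0]
            norm_num
          have ht : f - algebraMap k K (α ^ 4) = f + w ^ 4 := by
            rw [← hfw, hw4α, add_zero]
          refine ⟨f - algebraMap k K (α ^ 4), Or.inl ⟨hvf, α ^ 4, rfl, htne, ?_⟩, 0,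
            Or.inl rfl, ?_, ?_⟩
          · rw [ht]; omega
          · rw [show ∀ z : K, z + (0:K) ^ 4 = z from fun z => by ring, ht]
            exact hne
          · rw [show ∀ z : K, z + (0:K) ^ 4 = z from fun z => by ring, ht]
            exact hodd
        · refine ⟨f - algebraMap k K (α ^ 4), Or.inl ⟨hvf, α ^ 4, rfl, htne, ?_⟩,
            w - algebraMap k K α, Or.inr hαpos.le, ?_, ?_⟩
          · have ht : f - algebraMap k K (α ^ 4) = f + w ^ 4 + (w - algebraMap k K α) ^ 4 := by
              rw [← hfw, add_assoc, CharTwo.add_self_eq_zero, add_zero]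
            have hv4 : P.v ((w - algebraMap k K α) ^ 4) = 4 * P.v (w - algebraMap k K α) := by
              have := v_pow P hαne 4
              push_cast at this
              exact this
            have h1 := P.v_add (f + w ^ 4) ((w - algebraMap k K α) ^ 4) hne
              (pow_ne_zero _ hαne) (ht ▸ htne)
            rw [ht]
            omega
          · rw [hfw]; exact hne
          · rw [hfw]; exact hodd
      · -- v f > 0, even
        have hvw : 0 ≤ P.v w := by push_cast at hvp; omega
        exact ⟨f, Or.inl ⟨hvf, 0, by rw [map_zero, sub_zero], hf0, hvfpos⟩, w,
          Or.inr hvw, hne, hodd⟩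
    · -- v f ≥ 0, odd
      have hvfpos : 0 < P.v f := by
        obtain ⟨m, hm⟩ := ho
        omega
      refine ⟨f, Or.inl ⟨hvf, 0, by rw [map_zero, sub_zero], hf0, hvfpos⟩, 0,
        Or.inl rfl, ?_, ?_⟩
      · rw [show f + (0:K) ^ 4 = f by ring]; exact hf0
      · rw [show f + (0:K) ^ 4 = f by ring]; exact ho




end PTaux

open PTaux in
/-- `f ∈ H` is pseudo-tame at a place `v` if and only if some `Γ`-transform of
`f` is a uniformizer at `v`. -/
theorem pseudoTame_iff_exists_uniformizer
    (k K : Type*) [Field k] [IsAlgClosed k] [CharP k 2] [Field K] [Algebra k K]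
    (hK : IsFunctionFieldOneVar k K) (P : Place k K)
    (f : K) (hf : ∀ y : K, y ^ 2 ≠ f) :
    PseudoTameAt P f ↔
      ∃ a b c d : K, a * d ≠ b * c ∧
        P.v ((a ^ 4 * f + b ^ 4) / (c ^ 4 * f + d ^ 4)) = 1 := by
  haveI : CharP K 2 := charP_of_injective_algebraMap (algebraMap k K).injective 2
  have hf0 : f ≠ 0 := fun h => hf 0 (by rw [h]; ring)
  constructor
  · rintro ⟨t, htdef, h, hh, htne, hodd⟩
    rcases htdef with ⟨hvf, γ, htdef, ht0, htpos⟩ | ⟨hvf, htdef⟩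
    · obtain ⟨δ, hδ⟩ := IsAlgClosed.exists_pow_nat_eq γ (n := 4) (by norm_num)
      set w := h + algebraMap k K δ with hw
      have hw4 : t + h ^ 4 = 1 ^ 4 * f + w ^ 4 := by
        rw [htdef, hw, pow4_add, sub_eq_add',
          show (algebraMap k K δ) ^ 4 = algebraMap k K γ by rw [← map_pow, hδ]]
        ring
      have hD1 : (0:K) ^ 4 * f + 1 ^ 4 ≠ 0 := by norm_num
      have hq : (1 ^ 4 * f + w ^ 4) / ((0:K) ^ 4 * f + 1 ^ 4) = t + h ^ 4 := by
        rw [← hw4]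
        norm_num
      refine scale P f (a0 := 1) (b0 := w) (c0 := 0) (d0 := 1) ?_ ?_ hD1 ?_
      · norm_num
      · rw [← hw4]; exact htne
      · rw [hq]; exact hodd
    · have hN : h ^ 4 * f + 1 ^ 4 ≠ 0 := by
        intro hzz
        apply htne
        rw [htdef]
        have hc : f⁻¹ + h ^ 4 = (h ^ 4 * f + 1 ^ 4) / f := by
          field_simp
          ring
        rw [hc, hzz, zero_div]
      have hq : (h ^ 4 * f + 1 ^ 4) / (1 ^ 4 * f + (0:K) ^ 4) = t + h ^ 4 := by
        rw [htdef]
        have hc : f⁻¹ + h ^ 4 = (h ^ 4 * f + 1 ^ 4) / f := by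
          field_simp
          ring
        rw [hc]
        norm_num
      refine scale P f (a0 := h) (b0 := 1) (c0 := 1) (d0 := 0) ?_ hN ?_ ?_
      · norm_num
      · norm_num [hf0]
      · rw [hq]; exact hodd
  · rintro ⟨a, b, c, d, hdet, hval⟩
    have hD : c ^ 4 * f + d ^ 4 ≠ 0 := by
      intro h
      by_cases hc : c = 0
      · rw [hc] at h
        norm_num at h
        exact hdet (by rw [hc, h]; ring)
      · apply hf ((d / c) ^ 2)
        have h4 : c ^ 4 * f = d ^ 4 := by
          have := eq_neg_of_add_eq_zero_left h
          rwa [CharTwo.neg_eq] at this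
        field_simp
        linear_combination -h4
    have hNne : a ^ 4 * f + b ^ 4 ≠ 0 := by
      intro h
      by_cases ha : a = 0
      · rw [ha] at h
        norm_num at h
        exact hdet (by rw [ha, h]; ring)
      · apply hf ((b / a) ^ 2)
        have h4 : a ^ 4 * f = b ^ 4 := by
          have := eq_neg_of_add_eq_zero_left h
          rwa [CharTwo.neg_eq] at this
        field_simp
        linear_combination -h4
    rw [v_div P hNne hD] at hval
    rcases Int.even_or_odd (P.v (c ^ 4 * f + d ^ 4)) with he | ho
    · have hoddN : Odd (P.v (a ^ 4 * f + b ^ 4)) := by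
        obtain ⟨m, hm⟩ := he
        exact ⟨m, by omega⟩
      obtain ⟨w, h1, h2⟩ := extract P hNne hoddN
      exact key hK P hf h1 h2
    · obtain ⟨w, h1, h2⟩ := extract P hD ho
      exact key hK P hf h1 h2
end

section
/- For all f, g, g' ∈ H with a(f,g) ≡ a(f,g') (mod K²), there exist a, b, c, d ∈ K with a·d ≠ b·c such that g' = (a⁴·g + b⁴)/(c⁴·g + d⁴). (The set of g ∈ H with a given value of a(f,·) modulo K² consists of a single Γ-orbit, where Γ = PGL₂(K⁴).) -/
/-!
Write `g' = α² + β²·g` and expand `α, β` over `K²` in the basis `(1, g)`, so that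
`g' = r₀⁴ + r₁⁴·g + r₂⁴·g² + r₃⁴·g³`. In characteristic 2, `a(f,g) = c(f,g)²·g` with
`c(f,g) = (f₁f₃ + f₂²)/(f₁² + f₃²·g)` (`aRoot`), and `c` obeys a chain rule like that of the
Schwarzian derivative: `c(f,g) = β·c(f,g') + c(g',g)`. As `g ∉ K²`, the congruence
`a(f,g) ≡ a(f,g') (mod K²)` says exactly that `c(f,g) = β·c(f,g')`, so `c(g',g) = 0`, i.e.
`r₁r₃ = r₂²`: the point `(r₁ : r₂ : r₃)` lies on the conic `XZ = Y²`, parametrised by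
`(d² : dc : c²)`, and `(c, d) = (r₂, r₁)` yields the denominator `c⁴g + d⁴` of the transform.
-/

/-- The set `K² = {x² : x ∈ K}` of squares of `K`. -/
def sqSet (K : Type*) [Field K] : Set K := {x | ∃ y : K, y ^ 2 = x}

/-- `K` is two-dimensional as a vector space over its subfield `K²`:
there is some `g ∉ K²`, and for every such `g` the pair `(1, g)` spans `K`
over `K²`. -/
def TwoDimOverSquares (K : Type*) [Field K] : Prop :=
  (∃ g : K, g ∉ sqSet K) ∧
    ∀ g : K, g ∉ sqSet K → ∀ x : K, ∃ a b : K, x = a ^ 2 + b ^ 2 * g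

/-- The quantity `a(f,g) = (f₁²·f₃² + f₂⁴)·g / (f₃⁴·g² + f₁⁴)`, where
`f = f₀⁴ + f₁⁴·g + f₂⁴·g² + f₃⁴·g³` is the expansion of `f` with respect to `g`
in the basis `{1, g, g², g³}` of `K` over `K⁴`. -/
noncomputable def aOf {K : Type*} [Field K] (g f₁ f₂ f₃ : K) : K :=
  ((f₁ ^ 2 * f₃ ^ 2 + f₂ ^ 4) * g) / (f₃ ^ 4 * g ^ 2 + f₁ ^ 4)

section Quartic

variable {K : Type*} [Field K]

def quartic (g x₀ x₁ x₂ x₃ : K) : K :=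
  x₀ ^ 4 + x₁ ^ 4 * g + x₂ ^ 4 * g ^ 2 + x₃ ^ 4 * g ^ 3

noncomputable def aRoot (g x₁ x₂ x₃ : K) : K :=
  (x₁ * x₃ + x₂ ^ 2) / (x₁ ^ 2 + x₃ ^ 2 * g)

theorem ne_zero_of_sq_add_sq_mul_notMem {g a b : K} (h : a ^ 2 + b ^ 2 * g ∉ sqSet K) :
    b ≠ 0 := by
  rintro rfl
  exact h ⟨a, by ring⟩

section CharacteristicTwo

variable [CharP K 2]

theorem sq_add_sq_mul_inj {g a b c d : K} (hg : g ∉ sqSet K)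
    (h : a ^ 2 + b ^ 2 * g = c ^ 2 + d ^ 2 * g) : a = c ∧ b = d := by
  obtain rfl : b = d := by
    by_contra hbd
    have hbd' : b + d ≠ 0 := fun h0 => hbd (CharTwo.add_eq_zero.1 h0)
    refine hg ⟨(a + c) / (b + d), ?_⟩
    field_simp
    linear_combination (norm := ring_nf) h
    reduce_mod_char!
  exact ⟨CharTwo.sq_inj.1 (add_right_cancel h), rfl⟩

theorem sq_add_sq_mul_subst (g α β u v : K) :
    u ^ 2 + v ^ 2 * (α ^ 2 + β ^ 2 * g) = (u + v * α) ^ 2 + (v * β) ^ 2 * g := by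
  ring_nf
  reduce_mod_char!

theorem quartic_eq (g x₀ x₁ x₂ x₃ : K) :
    quartic g x₀ x₁ x₂ x₃ = (x₀ ^ 2 + x₂ ^ 2 * g) ^ 2 + (x₁ ^ 2 + x₃ ^ 2 * g) ^ 2 * g := by
  unfold quartic
  ring_nf
  reduce_mod_char!

theorem quartic_odd_ne_zero_of_notMem {g x₀ x₁ x₂ x₃ : K} (h : quartic g x₀ x₁ x₂ x₃ ∉ sqSet K) :
    x₁ ^ 2 + x₃ ^ 2 * g ≠ 0 :=
  ne_zero_of_sq_add_sq_mul_notMem (quartic_eq g x₀ x₁ x₂ x₃ ▸ h)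

theorem aOf_eq_aRoot_sq_mul (g x₁ x₂ x₃ : K) : aOf g x₁ x₂ x₃ = aRoot g x₁ x₂ x₃ ^ 2 * g := by
  rw [aOf, aRoot, div_pow, CharTwo.add_sq, CharTwo.add_sq, div_mul_eq_mul_div]
  ring

theorem eq_mul_of_sq_mul_add_sq_mul_mem {g α β x y : K} (hg : g ∉ sqSet K)
    (h : x ^ 2 * g + y ^ 2 * (α ^ 2 + β ^ 2 * g) ∈ sqSet K) : x = β * y := by
  obtain ⟨z, hz⟩ := h
  have h' : z ^ 2 + 0 ^ 2 * g = (y * α) ^ 2 + (x + β * y) ^ 2 * g := by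
    rw [zero_pow two_ne_zero, zero_mul, add_zero, hz]
    ring_nf
    reduce_mod_char!
  exact CharTwo.add_eq_zero.1 (sq_add_sq_mul_inj hg h').2.symm

theorem quartic_comp_coeffs {g α β r₀ r₁ r₂ r₃ p₀ p₁ p₂ p₃ q₀ q₁ q₂ q₃ : K} (hg : g ∉ sqSet K)
    (hα : α = r₀ ^ 2 + r₂ ^ 2 * g) (hβ : β = r₁ ^ 2 + r₃ ^ 2 * g)
    (hpq : quartic g p₀ p₁ p₂ p₃ = quartic (α ^ 2 + β ^ 2 * g) q₀ q₁ q₂ q₃) :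
    p₁ = (q₁ + q₃ * α) * r₁ + q₃ * β * r₃ * g ∧
      p₂ = q₂ * β + (q₁ + q₃ * α) * r₂ + q₃ * β * r₀ ∧
      p₃ = (q₁ + q₃ * α) * r₃ + q₃ * β * r₁ ∧
      p₁ ^ 2 + p₃ ^ 2 * g = (q₁ ^ 2 + q₃ ^ 2 * (α ^ 2 + β ^ 2 * g)) * β := by
  rw [quartic_eq, quartic_eq, sq_add_sq_mul_subst] at hpq
  obtain ⟨h₀₂, h₁₃⟩ := sq_add_sq_mul_inj hg hpq
  have h₁₃' : p₁ ^ 2 + p₃ ^ 2 * g = ((q₁ + q₃ * α) * r₁ + q₃ * β * r₃ * g) ^ 2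
      + ((q₁ + q₃ * α) * r₃ + q₃ * β * r₁) ^ 2 * g := by
    rw [h₁₃, hβ]
    ring_nf
    reduce_mod_char!
  have h₀₂' : p₀ ^ 2 + p₂ ^ 2 * g = (q₀ + q₂ * α + (q₁ + q₃ * α) * r₀ + q₃ * β * r₂ * g) ^ 2
      + (q₂ * β + (q₁ + q₃ * α) * r₂ + q₃ * β * r₀) ^ 2 * g := by
    rw [h₀₂, hα]
    ring_nf
    reduce_mod_char!
  obtain ⟨h₁, h₃⟩ := sq_add_sq_mul_inj hg h₁₃'
  exact ⟨h₁, (sq_add_sq_mul_inj hg h₀₂').2, h₃, h₁₃⟩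

theorem aRoot_comp {g α β r₀ r₁ r₂ r₃ p₀ p₁ p₂ p₃ q₀ q₁ q₂ q₃ : K} (hg : g ∉ sqSet K)
    (hα : α = r₀ ^ 2 + r₂ ^ 2 * g) (hβ : β = r₁ ^ 2 + r₃ ^ 2 * g)
    (hpq : quartic g p₀ p₁ p₂ p₃ = quartic (α ^ 2 + β ^ 2 * g) q₀ q₁ q₂ q₃)
    (hq : q₁ ^ 2 + q₃ ^ 2 * (α ^ 2 + β ^ 2 * g) ≠ 0) (hβ0 : β ≠ 0) :
    aRoot g p₁ p₂ p₃ = β * aRoot (α ^ 2 + β ^ 2 * g) q₁ q₂ q₃ + aRoot g r₁ r₂ r₃ := by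
  obtain ⟨h₁, h₂, h₃, hden⟩ := quartic_comp_coeffs hg hα hβ hpq
  have hnum : p₁ * p₃ + p₂ ^ 2 = β ^ 2 * (q₁ * q₃ + q₂ ^ 2)
      + (q₁ ^ 2 + q₃ ^ 2 * (α ^ 2 + β ^ 2 * g)) * (r₁ * r₃ + r₂ ^ 2) := by
    rw [h₁, h₂, h₃]
    linear_combination (norm := ring_nf) (q₃ * β) ^ 2 * hα + (q₁ + q₃ * α) * q₃ * β * hβ
    reduce_mod_char!
  rw [aRoot, aRoot, aRoot, hden, hnum, ← hβ]
  field_simp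

theorem exists_moebius_of_mul_eq_sq {g α β r₀ r₁ r₂ r₃ : K}
    (hα : α = r₀ ^ 2 + r₂ ^ 2 * g) (hβ : β = r₁ ^ 2 + r₃ ^ 2 * g) (hβ0 : β ≠ 0)
    (hconic : r₁ * r₃ = r₂ ^ 2) :
    ∃ a b c d : K, a * d ≠ b * c ∧
      α ^ 2 + β ^ 2 * g = (a ^ 4 * g + b ^ 4) / (c ^ 4 * g + d ^ 4) := by
  subst hα hβ
  rcases eq_or_ne r₁ 0 with rfl | hr₁
  · obtain rfl : r₂ = 0 := (pow_eq_zero_iff two_ne_zero).1 (by simpa using hconic.symm)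
    have hr₃g : r₃ ^ 2 * g ≠ 0 := by simpa using hβ0
    have hr₃ : r₃ ≠ 0 := by rintro rfl; simp at hr₃g
    have hg : g ≠ 0 := by rintro rfl; simp at hr₃g
    refine ⟨r₀ * r₃, r₃ ^ 2 * g, r₃, 0, by simp [hr₃, hg], ?_⟩
    field_simp
    ring
  · refine ⟨r₀ * r₂ + r₁ ^ 2, r₂ * r₃ * g + r₀ * r₁, r₂, r₁, fun h => ?_, ?_⟩
    · -- on the conic, `ad + bc = r₁β`
      refine mul_ne_zero hr₁ hβ0 ?_
      linear_combination (norm := ring_nf) h + r₃ * g * hconic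
      reduce_mod_char!
    · -- on the conic, `r₁²(r₂⁴g + r₁⁴) = r₁⁴β`
      have hden : r₂ ^ 4 * g + r₁ ^ 4 ≠ 0 := fun h => by
        refine mul_ne_zero (pow_ne_zero 4 hr₁) hβ0 ?_
        linear_combination r₁ ^ 2 * h + r₁ ^ 2 * g * (r₁ * r₃ + r₂ ^ 2) * hconic
      rw [eq_div_iff hden]
      linear_combination (norm := ring_nf) g ^ 3 * (r₁ * r₃ + r₂ ^ 2) ^ 3 * hconic
      reduce_mod_char!

end CharacteristicTwo

end Quartic

/-- The fiber of `a(f,·)` modulo `K²` through any `g ∈ H` is a single `Γ`-orbit: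
if `a(f,g) ≡ a(f,g') (mod K²)` then `g'` is a fractional linear transform of `g`
by an element of `Γ = PGL₂(K⁴)`. -/
theorem a_fiber_single_orbit (K : Type*) [Field K] [CharP K 2]
    (hdim : TwoDimOverSquares K)
    (f g g' : K) (hf : f ∉ sqSet K) (hg : g ∉ sqSet K) (hg' : g' ∉ sqSet K)
    (p₀ p₁ p₂ p₃ : K) (hp : f = p₀ ^ 4 + p₁ ^ 4 * g + p₂ ^ 4 * g ^ 2 + p₃ ^ 4 * g ^ 3)
    (q₀ q₁ q₂ q₃ : K)
    (hq : f = q₀ ^ 4 + q₁ ^ 4 * g' + q₂ ^ 4 * g' ^ 2 + q₃ ^ 4 * g' ^ 3)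
    (hcongr : aOf g p₁ p₂ p₃ + aOf g' q₁ q₂ q₃ ∈ sqSet K) :
    ∃ a b c d : K, a * d ≠ b * c ∧
      g' = (a ^ 4 * g + b ^ 4) / (c ^ 4 * g + d ^ 4) := by
  obtain ⟨α, β, rfl⟩ := hdim.2 g hg g'
  obtain ⟨r₀, r₂, hα⟩ := hdim.2 g hg α
  obtain ⟨r₁, r₃, hβ⟩ := hdim.2 g hg β
  have hβ0 : β ≠ 0 := ne_zero_of_sq_add_sq_mul_notMem hg'
  have hq0 : q₁ ^ 2 + q₃ ^ 2 * (α ^ 2 + β ^ 2 * g) ≠ 0 :=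
    quartic_odd_ne_zero_of_notMem (x₀ := q₀) (x₂ := q₂) (by rwa [hq] at hf)
  have hroot : aRoot g p₁ p₂ p₃ = β * aRoot (α ^ 2 + β ^ 2 * g) q₁ q₂ q₃ := by
    rw [aOf_eq_aRoot_sq_mul, aOf_eq_aRoot_sq_mul] at hcongr
    exact eq_mul_of_sq_mul_add_sq_mul_mem hg hcongr
  have hconic : r₁ * r₃ = r₂ ^ 2 := by
    have h := aRoot_comp hg hα hβ (hp.symm.trans hq) hq0 hβ0
    rw [hroot, left_eq_add, aRoot, div_eq_zero_iff, ← hβ] at h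
    exact CharTwo.add_eq_zero.1 (h.resolve_right hβ0)
  exact exists_moebius_of_mul_eq_sq hα hβ hβ0 hconic
end

section
/- Let f, g ∈ H, let f = f₀⁴ + f₁⁴·g + f₂⁴·g² + f₃⁴·g³ be the expansion of f with respect to g, and let g = g₀⁴ + g₁⁴·f + g₂⁴·f² + g₃⁴·f³ be the expansion of g with respect to f. Then f₁²·f₃² + f₂⁴ = (f₁⁴ + f₃⁴·g²)³ · (g₁²·g₃² + g₂⁴). (This is the relation A(f,g) = (df/dg)³·A(g,f), since df/dg = f₁⁴ + f₃⁴·g².) -/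
/-- Uniqueness of expansions in the basis `(1, g)` over `K²`. -/
lemma sq_uniq {K : Type*} [Field K] [CharP K 2] {g a b c d : K} (hg : g ∉ sqSet K)
    (h : a ^ 2 + b ^ 2 * g = c ^ 2 + d ^ 2 * g) : a = c ∧ b = d := by
  have h2 : (2 : K) = 0 := by exact_mod_cast CharP.cast_eq_zero K 2
  have hbd : b = d := by
    by_contra hne
    have hbd0 : b + d ≠ 0 := fun h0 => hne (by linear_combination h0 - d * h2)
    apply hg
    refine ⟨(a + c) / (b + d), ?_⟩
    field_simp
    linear_combination h + (a*c + c^2 - g*b*d - g*d^2 + d^2*g - g*b^2) * h2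
  subst hbd
  refine ⟨?_, rfl⟩
  have hz : (a - c) ^ 2 = 0 := by linear_combination h + (c^2 - a*c) * h2
  have h0 := pow_eq_zero_iff (n := 2) (by norm_num) |>.mp hz
  linear_combination h0

/-- The relation `A(f,g) = (df/dg)³ · A(g,f)`: if `f = f₀⁴ + f₁⁴g + f₂⁴g² + f₃⁴g³`
and `g = g₀⁴ + g₁⁴f + g₂⁴f² + g₃⁴f³` are the mutual expansions of `f, g ∈ H`,
then `f₁²f₃² + f₂⁴ = (f₁⁴ + f₃⁴g²)³ · (g₁²g₃² + g₂⁴)`. -/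
theorem A_relation (K : Type*) [Field K] [CharP K 2] (hdim : TwoDimOverSquares K)
    (f g : K) (hf : f ∉ sqSet K) (hg : g ∉ sqSet K)
    (f₀ f₁ f₂ f₃ : K)
    (hfg : f = f₀ ^ 4 + f₁ ^ 4 * g + f₂ ^ 4 * g ^ 2 + f₃ ^ 4 * g ^ 3)
    (g₀ g₁ g₂ g₃ : K)
    (hgf : g = g₀ ^ 4 + g₁ ^ 4 * f + g₂ ^ 4 * f ^ 2 + g₃ ^ 4 * f ^ 3) :
    f₁ ^ 2 * f₃ ^ 2 + f₂ ^ 4 =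
      (f₁ ^ 4 + f₃ ^ 4 * g ^ 2) ^ 3 * (g₁ ^ 2 * g₃ ^ 2 + g₂ ^ 4) := by
  have h2 : (2 : K) = 0 := by exact_mod_cast CharP.cast_eq_zero K 2
  set s := f₀ ^ 2 + f₂ ^ 2 * g with hsd
  set t := f₁ ^ 2 + f₃ ^ 2 * g with htd
  set σ := g₀ ^ 2 + g₂ ^ 2 * f with hσd
  set τ := g₁ ^ 2 + g₃ ^ 2 * f with hτd
  have hs : f = s ^ 2 + t ^ 2 * g := by
    linear_combination hfg - (s + f₀^2 + f₂^2*g)*hsd - g*(t + f₁^2 + f₃^2*g)*htd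
      - (f₁^2*f₃^2*g^2 + f₀^2*f₂^2*g) * h2
  have hσs : g = σ ^ 2 + τ ^ 2 * f := by
    linear_combination hgf - (σ + g₀^2 + g₂^2*f)*hσd - f*(τ + g₁^2 + g₃^2*f)*hτd
      - (g₁^2*g₃^2*f^2 + g₀^2*g₂^2*f) * h2
  have ht : t ≠ 0 := by
    intro h0
    exact hf ⟨s, by linear_combination -hs - g*t*h0 - g*(0:K)*h0⟩
  have hτ0 : τ ≠ 0 := by
    intro h0
    exact hg ⟨σ, by linear_combination -hσs - f*τ*h0⟩
  have hgg : g * (1 + τ*t)^2 = (σ + τ*s)^2 := by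
    linear_combination hσs + τ^2*hs + (g*τ*t + g*τ^2*t^2 - σ*τ*s) * h2
  have h1 : 1 + τ*t = 0 := by
    by_contra hne
    apply hg
    refine ⟨(σ + τ*s)/(1 + τ*t), ?_⟩
    field_simp
    linear_combination -hgg
  have hτt : τ * t = 1 := by linear_combination -h1 + τ*t*h2
  have hz : (σ + τ*s)^2 = 0 := by linear_combination -hgg + g*(1+τ*t)*h1
  have hστ : σ = τ * s := by
    have h0 : σ + τ*s = 0 := pow_eq_zero_iff (n := 2) (by norm_num) |>.mp hz
    linear_combination h0 - τ*s*h2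
  -- expansion comparisons via uniqueness
  have heq1 : (g₁ + g₃*s)^2 + (g₃*t)^2*g = (f₁/t)^2 + (f₃/t)^2*g := by
    field_simp
    linear_combination -t^2*hτd - g₃^2*t^2*hs + t*hτt + htd + g₁*g₃*s*t^2*h2
  obtain ⟨hA, hB⟩ := sq_uniq hg heq1
  have heq2 : (g₀ + g₂*s)^2 + (g₂*t)^2*g = ((f₀*f₁ + f₂*f₃*g)/t)^2 + ((f₀*f₃ + f₁*f₂)/t)^2*g := by
    field_simp
    linear_combination -t^2*hσd - g₂^2*t^2*hs + t^2*hστ + s*t*hτt + t*hsd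
      + (f₀^2 + f₂^2*g)*htd + (g₀*g₂*s*t^2 - 2*f₀*f₁*f₂*f₃*g)*h2
  obtain ⟨hC, hD⟩ := sq_uniq hg heq2
  -- turn into polynomial relations
  have hB' : g₃ * t^2 = f₃ := by
    field_simp at hB
    linear_combination hB
  have hD' : g₂ * t^2 = f₀*f₃ + f₁*f₂ := by
    field_simp at hD
    linear_combination hD
  have hA' : g₁ * t^2 = f₁*t + f₃*s := by
    field_simp at hA
    linear_combination t*hA - s*hB' - f₃*s*h2
  -- final identity
  have hu : f₁ ^ 4 + f₃ ^ 4 * g ^ 2 = t ^ 2 := by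
    linear_combination -(t + f₁^2 + f₃^2*g)*htd - f₁^2*f₃^2*g*h2
  rw [hu]
  apply mul_right_cancel₀ (pow_ne_zero 2 ht)
  linear_combination (g₁*g₃^2*t^6 + f₃*g₃^2*s*t^4 + f₁*g₃^2*t^5) * hA'
    + (f₃^2*g₃*s^2*t^2 + f₃^3*s^2 + f₁^2*g₃*t^4 + f₁^2*f₃*t^2) * hB'
    + (g₂^3*t^6 + f₁*f₂*g₂^2*t^4 + f₁^2*f₂^2*g₂*t^2 + f₁^3*f₂^3 + f₀*f₃*g₂^2*t^4
        + f₀*f₁^2*f₂^2*f₃ + f₀^2*f₃^2*g₂*t^2 + f₀^2*f₁*f₂*f₃^2 + f₀^3*f₃^3) * hD'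
    + (f₃^4*s + f₂^2*f₃^4*g + f₀^2*f₃^4) * hsd
    + (f₂^4*t + f₂^4*f₃^2*g + f₁^2*f₂^4) * htd
    + (-(g₂^4*t^8) - g₁^2*g₃^2*t^8 + f₂^4*f₃^4*g^2 + f₁*f₃*g₃^2*s*t^5 + f₁^2*f₃^2*t^2
        + f₁^2*f₂^4*f₃^2*g + f₁^4*f₂^4 + f₀*f₁*f₂*f₃*g₂^2*t^4 + f₀*f₁^3*f₂^3*f₃
        + f₀^2*f₂^2*f₃^4*g + f₀^2*f₁^2*f₂^2*f₃^2 + f₀^3*f₁*f₂*f₃^3 + f₀^4*f₃^4) * h2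
end

section
/- Let k be an algebraically closed field of characteristic 2 and let F be a formal power series over k with F(0) = 0 such that the coefficient of sⁿ in F is nonzero for some odd n; let n₀ be the smallest odd n with this property. Then the following are equivalent: (1) there exists a formal power series h over k such that F + h⁴ is nonzero and the order of F + h⁴ is odd; (2) for every n < n₀, if the coefficient of sⁿ in F is nonzero then n is divisible by 4. (This is the power-series characterization of pseudo-tameness: condition (2) says that every non-vanishing term of F of degree smaller than ord(dF) + 1 = n₀ has degree a multiple of four.) -/
/-!
In characteristic `p`, Frobenius makes `h ^ p ^ e` the series `∑ (hₘ) ^ p ^ e s ^ (p ^ e m)`, so adding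
a `p ^ e`-th power never changes the coefficients at indices not divisible by `p ^ e`, and over a ring
where every element is a `p ^ e`-th power it can cancel all the others. With `p ^ e = 4`,
the odd coefficients of `F + h⁴` are those of `F`, so an odd order of `F + h⁴` is at least `n₀`
and every term of `F` below `n₀` must have been cancelled by `h⁴`; conversely choosing `h` to
cancel every coefficient of index divisible by `4` leaves `sⁿ⁰` as the leading term.
-/

open PowerSeries

namespace PowerSeries

variable {R : Type*} [CommRing R] (p : ℕ) [ExpChar R p]

theorem coeff_pow_expChar_pow (f : R⟦X⟧) (e n : ℕ) :
    coeff n (f ^ p ^ e) = if p ^ e ∣ n then coeff (n / p ^ e) f ^ p ^ e else 0 := by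
  have hp := expChar_ne_zero R p
  rw [← MvPowerSeries.map_iterateFrobenius_expand p hp f e]
  change coeff n (map (iterateFrobenius R p e) (expand (p ^ e) (pow_ne_zero e hp) f)) = _
  rw [coeff_map, coeff_expand, apply_ite (iterateFrobenius R p e), iterateFrobenius_def, map_zero]

theorem coeff_add_pow_expChar_pow_of_not_dvd (F f : R⟦X⟧) {e n : ℕ} (hn : ¬p ^ e ∣ n) :
    coeff n (F + f ^ p ^ e) = coeff n F := by
  rw [map_add, coeff_pow_expChar_pow, if_neg hn, add_zero]

theorem exists_coeff_add_pow_expChar_pow_eq (e : ℕ) (hroot : ∀ a : R, ∃ b, b ^ p ^ e = a)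
    (F : R⟦X⟧) :
    ∃ f : R⟦X⟧, ∀ n, coeff n (F + f ^ p ^ e) = if p ^ e ∣ n then 0 else coeff n F := by
  choose root root_pow using hroot
  refine ⟨mk fun m => root (-coeff (p ^ e * m) F), fun n => ?_⟩
  split_ifs with hn
  · obtain ⟨m, rfl⟩ := hn
    rw [map_add, coeff_pow_expChar_pow, if_pos (dvd_mul_right _ _),
      Nat.mul_div_cancel_left _ (pow_pos (expChar_pos R p) e), coeff_mk, root_pow, add_neg_cancel]
  · exact coeff_add_pow_expChar_pow_of_not_dvd p F _ hn

end PowerSeries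

theorem pseudoTame_powerSeries_characterization_general
    (k : Type*) [Field k] [IsAlgClosed k] [CharP k 2]
    (F : PowerSeries k)
    (n₀ : ℕ) (hodd : Odd n₀) (hne : PowerSeries.coeff (R := k) n₀ F ≠ 0)
    (hmin : ∀ m : ℕ, m < n₀ → Odd m → PowerSeries.coeff (R := k) m F = 0) :
    (∃ h : PowerSeries k, ∃ n : ℕ, Odd n ∧
        (∀ m : ℕ, m < n → PowerSeries.coeff (R := k) m (F + h ^ 4) = 0) ∧
        PowerSeries.coeff (R := k) n (F + h ^ 4) ≠ 0) ↔
      (∀ n : ℕ, n < n₀ → PowerSeries.coeff (R := k) n F ≠ 0 → 4 ∣ n) := by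
  have not_dvd_of_odd {n : ℕ} (hn : Odd n) : ¬4 ∣ n := by
    obtain ⟨c, rfl⟩ := hn; omega
  have coeff_add_fourth_pow {n : ℕ} (h : k⟦X⟧) (hn : ¬4 ∣ n) :
      coeff n (F + h ^ 4) = coeff n F :=
    coeff_add_pow_expChar_pow_of_not_dvd 2 F h (e := 2) hn
  constructor
  · rintro ⟨h, n, hn, hlow, hlead⟩ m hm hFm
    have hn₀ : n₀ ≤ n := by
      by_contra! hlt
      rw [coeff_add_fourth_pow h (not_dvd_of_odd hn)] at hlead
      exact hlead (hmin n hlt hn)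
    by_contra hm4
    exact hFm (coeff_add_fourth_pow h hm4 ▸ hlow m (hm.trans_le hn₀))
  · intro hdiv
    obtain ⟨h, hh⟩ : ∃ h : k⟦X⟧, ∀ n, coeff n (F + h ^ 4) = if 4 ∣ n then 0 else coeff n F :=
      exists_coeff_add_pow_expChar_pow_eq 2 2
        (fun a => IsAlgClosed.exists_pow_nat_eq a (by norm_num)) F
    refine ⟨h, n₀, hodd, fun m hm => ?_, ?_⟩
    · rw [hh]
      split_ifs with hm4
      · rfl
      · exact not_imp_comm.mp (hdiv m hm) hm4
    · rwa [hh, if_neg (not_dvd_of_odd hodd)]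

/-- **Power-series characterization of pseudo-tameness.** Let `k` be algebraically
closed of characteristic two, `F ∈ k⟦s⟧` with `F(0) = 0`, and let `n₀` be the
smallest odd `n` with a nonzero coefficient of `sⁿ` in `F`. Then some `h ∈ k⟦s⟧`
makes `F + h⁴` nonzero of odd order if and only if every `n < n₀` with nonzero
coefficient of `sⁿ` in `F` is divisible by `4`. -/
theorem pseudoTame_powerSeries_characterization
    (k : Type*) [Field k] [IsAlgClosed k] [CharP k 2]
    (F : PowerSeries k) (hF0 : PowerSeries.coeff (R := k) 0 F = 0)
    (n₀ : ℕ) (hodd : Odd n₀) (hne : PowerSeries.coeff (R := k) n₀ F ≠ 0)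
    (hmin : ∀ m : ℕ, m < n₀ → Odd m → PowerSeries.coeff (R := k) m F = 0) :
    (∃ h : PowerSeries k, ∃ n : ℕ, Odd n ∧
        (∀ m : ℕ, m < n → PowerSeries.coeff (R := k) m (F + h ^ 4) = 0) ∧
        PowerSeries.coeff (R := k) n (F + h ^ 4) ≠ 0) ↔
      (∀ n : ℕ, n < n₀ → PowerSeries.coeff (R := k) n F ≠ 0 → 4 ∣ n) :=
  pseudoTame_powerSeries_characterization_general k F n₀ hodd hne hmin
end
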